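/- Let ψ : A → Set Λ be a semi-transition map on a commutative ring A, and suppose A is a pm-ring. Then the maximal spectrum Max(A) (the set of maximal ideals of A with the Zariski topology) is homeomorphic to the maximal spectrum Max(A_S) of the localization A_S, where S = {a ∈ A | ψ(a) = ∅}. -/

import Mathlib

/-- A semi-transition map on a commutative ring `A` with values in subsets of a
nonempty set `Λ`. -/
structure IsSemiTransition {A : Type*} [CommRing A] {Λ : Type*} (ψ : A → Set Λ) : Prop where
  nonempty : Nonempty Λ
  map_mul : ∀ a b : A, ψ (a * b) = ψ a ∪ ψ b
  map_one : ψ 1 = ∅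
  eq_univ_iff : ∀ a : A, ψ a = Set.univ ↔ a = 0
  inter_eq : ∀ a b : A, ∃ c ∈ Ideal.span {a, b}, ψ a ∩ ψ b = ψ c ∧ ψ c ⊆ ψ (a + b)
  principal : ∀ a b : A, ψ a ∩ ψ b = ∅ →
    ∃ m n : ℕ, 0 < m ∧ 0 < n ∧ (Ideal.span {a ^ m, b ^ n} : Ideal A).IsPrincipal

/-- A pm-ring: every prime ideal is contained in a unique maximal ideal. -/
def IsPMRing (A : Type*) [CommRing A] : Prop :=
  ∀ P : Ideal A, P.IsPrime → ∃! M : Ideal A, M.IsMaximal ∧ P ≤ M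

/-- The maximal spectrum of a commutative ring: the set of maximal ideals. -/
def MaxSpec (A : Type*) [CommRing A] : Type _ := {M : Ideal A // M.IsMaximal}

/-- The Zariski topology on the maximal spectrum: the sets
`{M | a ∈ M}` form a base of closed sets. -/
instance (A : Type*) [CommRing A] : TopologicalSpace (MaxSpec A) :=
  TopologicalSpace.generateFrom {V | ∃ a : A, V = {M : MaxSpec A | a ∈ M.1}ᶜ}

/-!
Every `s ∈ S` is a non-zero-divisor: `c * s = 0` gives `ψ c = ψ (c * s) = Λ`, so `c = 0`. Hence
the minimal primes inside a maximal ideal of `A` avoid `S` and lie under maximal ideals of `A_S`;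
in a pm-ring this makes `Q ↦` (the unique maximal ideal above `Q ∩ A`) a surjection
`Max(A_S) → Max(A)`. It is continuous since, in a pm-ring, `b ∉ M` yields `c ∉ M` and `x` with
`c * (1 + b * x) = 0`, so that `D(c)` is mapped into `D(b)`. The semi-transition axioms turn
`a + b ∈ S` into coprime `e, f` with `d * e = a ^ m` and `d * f = b ^ n` for some `d ∈ S`; thus `e`
and `f` separate the `S`-disjoint primes containing `a` from those containing `b`, which gives
injectivity and openness.
-/

section

variable {A : Type*} [CommRing A]

namespace MaxSpec

lemma isOpen_basicOpen (a : A) : IsOpen {M : MaxSpec A | a ∈ M.1}ᶜ :=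
  TopologicalSpace.isOpen_generateFrom_of_mem ⟨a, rfl⟩

lemma continuous_iff {X : Type*} [TopologicalSpace X] {g : X → MaxSpec A} :
    Continuous g ↔ ∀ a : A, IsOpen (g ⁻¹' {M | a ∈ M.1}ᶜ) := by
  refine continuous_generateFrom_iff.trans ⟨fun h a => h _ ⟨a, rfl⟩, ?_⟩
  rintro h _ ⟨a, rfl⟩
  exact h a

end MaxSpec

namespace IsPMRing

lemma eq_of_le (hA : IsPMRing A) {P M N : Ideal A} (hP : P.IsPrime) (hM : M.IsMaximal)
    (hN : N.IsMaximal) (hPM : P ≤ M) (hPN : P ≤ N) : M = N :=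
  (hA P hP).unique ⟨hM, hPM⟩ ⟨hN, hPN⟩

noncomputable def maxAbove (hA : IsPMRing A) (P : Ideal A) (hP : P.IsPrime) : MaxSpec A :=
  ⟨(hA P hP).exists.choose, (hA P hP).exists.choose_spec.1⟩

lemma le_maxAbove (hA : IsPMRing A) (P : Ideal A) (hP : P.IsPrime) :
    P ≤ (hA.maxAbove P hP).1 :=
  (hA P hP).exists.choose_spec.2

lemma exists_mul_one_add_mul_eq_zero (hA : IsPMRing A) {M : Ideal A} (hM : M.IsMaximal) {b : A}
    (hb : b ∉ M) : ∃ c ∉ M, ∃ x, c * (1 + b * x) = 0 := by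
  by_contra! h
  have hone : (1 : A) ∉ M := (M.ne_top_iff_one).mp hM.ne_top
  let T : Submonoid A :=
    { carrier := {y | ∃ c ∉ M, ∃ x, c * (1 + b * x) = y}
      one_mem' := ⟨1, hone, 0, by ring⟩
      mul_mem' := by
        rintro _ _ ⟨c, hc, x, rfl⟩ ⟨d, hd, y, rfl⟩
        exact ⟨c * d, hM.isPrime.mul_notMem hc hd, x + y + b * x * y, by ring⟩ }
  -- A prime avoiding `T` lies in `M` and, together with `b`, in a maximal ideal, which must be `M`.
  obtain ⟨P, hP, -, hPT⟩ := Ideal.exists_le_prime_disjoint ⊥ T <| by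
    rw [Set.disjoint_left]
    rintro _ rfl ⟨c, hc, x, hcx⟩
    exact h c hc x hcx
  have hPM : P ≤ M := fun t ht =>
    by_contra fun htM => Set.disjoint_left.mp hPT ht ⟨t, htM, 0, by ring⟩
  have hbP : Ideal.span {b} ⊔ P ≠ ⊤ := by
    rw [Ne, Ideal.eq_top_iff_one, Ideal.mem_span_singleton_sup]
    rintro ⟨x, i, hi, hxi⟩
    exact Set.disjoint_left.mp hPT hi ⟨1, hone, -x, by linear_combination -hxi⟩
  obtain ⟨N, hN, hbPN⟩ := Ideal.exists_le_maximal _ hbP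
  have hNM : N = M := hA.eq_of_le hP hN hM (le_sup_right.trans hbPN) hPM
  exact hb (hNM ▸ hbPN (Ideal.mem_sup_left (Ideal.mem_span_singleton_self b)))

variable (B : Type*) [CommRing B] [Algebra A B]

noncomputable def comapMaxSpec (hA : IsPMRing A) (Q : MaxSpec B) : MaxSpec A :=
  hA.maxAbove (Q.1.under A) (Q.2.isPrime.under A)

lemma under_le_comapMaxSpec (hA : IsPMRing A) (Q : MaxSpec B) :
    Q.1.under A ≤ (hA.comapMaxSpec B Q).1 :=
  hA.le_maxAbove _ _

lemma continuous_comapMaxSpec (hA : IsPMRing A) : Continuous (hA.comapMaxSpec B) := by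
  refine MaxSpec.continuous_iff.mpr fun b => isOpen_iff_forall_mem_open.mpr fun Q₀ hbQ₀ => ?_
  obtain ⟨c, hc, x, hcx⟩ := hA.exists_mul_one_add_mul_eq_zero (hA.comapMaxSpec B Q₀).2 hbQ₀
  refine ⟨{Q | algebraMap A B c ∈ Q.1}ᶜ, fun Q hcQ hbQ => ?_, MaxSpec.isOpen_basicOpen _,
    fun hcQ₀ => hc (hA.under_le_comapMaxSpec B Q₀ hcQ₀)⟩
  have hbx : 1 + b * x ∈ Q.1.under A :=
    ((Q.2.isPrime.under A).mem_or_mem (hcx ▸ zero_mem _)).resolve_left hcQ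
  have hone : (1 : A) ∈ (hA.comapMaxSpec B Q).1 :=
    (Ideal.add_mem_iff_left _ (Ideal.mul_mem_right x _ hbQ)).mp
      (hA.under_le_comapMaxSpec B Q hbx)
  exact (hA.comapMaxSpec B Q).2.ne_top ((Ideal.eq_top_iff_one _).mpr hone)

end IsPMRing

def Submonoid.IsSeparating (S : Submonoid A) : Prop :=
  ∀ a b : A, a + b ∈ S → ∃ e f : A, IsCoprime e f ∧
    ∀ P : Ideal A, P.IsPrime → Disjoint (S : Set A) P → (a ∈ P → e ∈ P) ∧ (b ∈ P → f ∈ P)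

lemma Submonoid.IsSeparating.exists_isCoprime {S : Submonoid A} (hS : S.IsSeparating)
    (L : Type*) [CommRing L] [Algebra A L] [IsLocalization S L] {Q : Ideal L} (hQ : Q.IsMaximal)
    {a : A} (ha : algebraMap A L a ∉ Q) :
    ∃ e f : A, IsCoprime e f ∧ algebraMap A L e ∈ Q ∧
      ∀ Q' : Ideal L, Q'.IsPrime → algebraMap A L a ∈ Q' → algebraMap A L f ∈ Q' := by
  have htop : (Ideal.span {a} ⊔ Q.under A).map (algebraMap A L) = ⊤ := by
    by_contra hne
    refine ha ((hQ.eq_of_le hne ?_).symm ▸ Ideal.mem_map_of_mem _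
      (Ideal.mem_sup_left (Ideal.mem_span_singleton_self a)))
    calc Q = (Q.under A).map (algebraMap A L) := (IsLocalization.map_under S L Q).symm
      _ ≤ _ := Ideal.map_mono le_sup_right
  obtain ⟨w, hwS, hw⟩ := Set.not_disjoint_iff.mp
    ((IsLocalization.map_algebraMap_ne_top_iff_disjoint S L _).not.mp (not_not.mpr htop))
  obtain ⟨x, p, hp, rfl⟩ := Ideal.mem_span_singleton_sup.mp hw
  obtain ⟨e, f, hef, hsep⟩ := hS p (x * a) (add_comm (x * a) p ▸ hwS)
  have hsep' (Q' : Ideal L) (hQ' : Q'.IsPrime) :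
      (p ∈ Q'.under A → e ∈ Q'.under A) ∧ (x * a ∈ Q'.under A → f ∈ Q'.under A) :=
    let ⟨hP, hSP⟩ := (IsLocalization.isPrime_iff_isPrime_disjoint S L Q').mp hQ'
    hsep _ hP hSP
  exact ⟨e, f, hef, (hsep' Q hQ.isPrime).1 hp,
    fun Q' hQ' haQ' => (hsep' Q' hQ').2 (Ideal.mul_mem_left _ x haQ')⟩

namespace IsSemiTransition

variable {Λ : Type*} {ψ : A → Set Λ} {S : Submonoid A}

lemma map_pow (hψ : IsSemiTransition ψ) (a : A) {m : ℕ} (hm : 0 < m) : ψ (a ^ m) = ψ a := by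
  induction m, hm using Nat.le_induction with
  | base => rw [pow_one]
  | succ k _ ih => rw [pow_succ, hψ.map_mul, ih, Set.union_self]

lemma mem_nonZeroDivisors (hψ : IsSemiTransition ψ) {s : A} (hs : ψ s = ∅) :
    s ∈ nonZeroDivisors A :=
  mem_nonZeroDivisors_iff_right.mpr fun c hcs => (hψ.eq_univ_iff c).mp <| by
    rw [← Set.union_empty (ψ c), ← hs, ← hψ.map_mul, hcs, (hψ.eq_univ_iff 0).mpr rfl]

lemma exists_isCoprime_of_map_add (hψ : IsSemiTransition ψ) {a b : A} (hab : ψ (a + b) = ∅) :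
    ∃ d e f : A, ∃ m n : ℕ, ψ d = ∅ ∧ IsCoprime e f ∧ 0 < m ∧ 0 < n ∧
      a ^ m = d * e ∧ b ^ n = d * f := by
  obtain ⟨c, -, hc, hcab⟩ := hψ.inter_eq a b
  have hdisj : ψ a ∩ ψ b = ∅ := hc ▸ Set.subset_eq_empty hcab hab
  obtain ⟨m, n, hm, hn, d, hd⟩ := hψ.principal a b hdisj
  have hspan : Ideal.span {a ^ m, b ^ n} = Ideal.span {d} := hd
  obtain ⟨e, he⟩ : d ∣ a ^ m :=
    Ideal.mem_span_singleton.mp (hspan ▸ Ideal.subset_span (Set.mem_insert _ _))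
  obtain ⟨f, hf⟩ : d ∣ b ^ n :=
    Ideal.mem_span_singleton.mp (hspan ▸ Ideal.subset_span (Set.mem_insert_of_mem _ rfl))
  obtain ⟨α, β, hαβ⟩ := Ideal.mem_span_pair.mp (hspan ▸ Ideal.mem_span_singleton_self d)
  have hψd : ψ d = ∅ := by
    refine Set.subset_eq_empty (Set.subset_inter ?_ ?_) hdisj
    · rw [← hψ.map_pow a hm, he, hψ.map_mul]
      exact Set.subset_union_left
    · rw [← hψ.map_pow b hn, hf, hψ.map_mul]
      exact Set.subset_union_left
  have hcoprime : α * e + β * f = 1 := by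
    refine sub_eq_zero.mp (mem_nonZeroDivisors_iff_right.mp (hψ.mem_nonZeroDivisors hψd) _ ?_)
    linear_combination hαβ - α * he - β * hf
  exact ⟨d, e, f, m, n, hψd, ⟨α, β, hcoprime⟩, hm, hn, he, hf⟩

lemma le_nonZeroDivisors (hψ : IsSemiTransition ψ) (hS : (S : Set A) = {a : A | ψ a = ∅}) :
    S ≤ nonZeroDivisors A := fun s hs =>
  hψ.mem_nonZeroDivisors ((Set.ext_iff.mp hS s).mp hs)

lemma isSeparating (hψ : IsSemiTransition ψ) (hS : (S : Set A) = {a : A | ψ a = ∅}) :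
    S.IsSeparating := by
  intro a b hab
  obtain ⟨d, e, f, m, n, hd, hef, hm, hn, he, hf⟩ :=
    hψ.exists_isCoprime_of_map_add ((Set.ext_iff.mp hS _).mp hab)
  refine ⟨e, f, hef, fun P hP hSP => ?_⟩
  have hdP : d ∉ P := Set.disjoint_left.mp hSP ((Set.ext_iff.mp hS d).mpr hd)
  exact ⟨fun ha => (hP.mem_or_mem (he ▸ P.pow_mem_of_mem ha m hm)).resolve_left hdP,
    fun hb => (hP.mem_or_mem (hf ▸ P.pow_mem_of_mem hb n hn)).resolve_left hdP⟩

end IsSemiTransition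

namespace IsPMRing

variable {S : Submonoid A} (L : Type*) [CommRing L] [Algebra A L] [IsLocalization S L]

lemma comapMaxSpec_surjective (hA : IsPMRing A) (hS₀ : S ≤ nonZeroDivisors A) :
    Function.Surjective (hA.comapMaxSpec L) := by
  intro M
  have := M.2.isPrime
  obtain ⟨P, hPmin, hPM⟩ := Ideal.exists_minimalPrimes_le (bot_le : ⊥ ≤ M.1)
  have hP : P.IsPrime := hPmin.1.1
  have hSP : Disjoint (S : Set A) P :=
    (Ideal.disjoint_nonZeroDivisors_of_mem_minimalPrimes hPmin).symm.mono_left hS₀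
  obtain ⟨Q, hQ, hPQ⟩ :=
    Ideal.exists_le_maximal _ (IsLocalization.isPrime_of_isPrime_disjoint S L P hP hSP).ne_top
  refine ⟨⟨Q, hQ⟩, Subtype.ext (hA.eq_of_le hP (hA.comapMaxSpec L ⟨Q, hQ⟩).2 M.2 ?_ hPM)⟩
  exact (Ideal.map_le_iff_le_comap.mp hPQ).trans (hA.under_le_comapMaxSpec L ⟨Q, hQ⟩)

lemma comapMaxSpec_injective (hA : IsPMRing A) (hS : S.IsSeparating) :
    Function.Injective (hA.comapMaxSpec L) := by
  intro Q₁ Q₂ h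
  by_contra hne
  have hle : ¬ Q₁.1.under A ≤ Q₂.1.under A := fun hle =>
    hne (Subtype.ext (Q₁.2.eq_of_le Q₂.2.ne_top ((IsLocalization.under_le_under_iff S L).mp hle)))
  obtain ⟨a, ha₁, ha₂⟩ := SetLike.not_le_iff_exists.mp hle
  obtain ⟨e, f, hef, he, hf⟩ := hS.exists_isCoprime L Q₂.2 ha₂
  have he₁ : e ∈ (hA.comapMaxSpec L Q₁).1 := h ▸ hA.under_le_comapMaxSpec L Q₂ he
  have hf₁ : f ∈ (hA.comapMaxSpec L Q₁).1 := hA.under_le_comapMaxSpec L Q₁ (hf _ Q₁.2.isPrime ha₁)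
  exact (hA.comapMaxSpec L Q₁).2.isPrime.notMem_of_isCoprime_of_mem hef he₁ hf₁

lemma isOpen_image_comapMaxSpec (hA : IsPMRing A) (hS₀ : S ≤ nonZeroDivisors A)
    (hS : S.IsSeparating) (z : L) : IsOpen (hA.comapMaxSpec L '' {Q | z ∈ Q.1}ᶜ) := by
  refine isOpen_iff_forall_mem_open.mpr ?_
  rintro _ ⟨Q₀, hzQ₀, rfl⟩
  obtain ⟨a, s, rfl⟩ := IsLocalization.exists_mk'_eq S z
  obtain ⟨e, f, hef, he, hf⟩ :=
    hS.exists_isCoprime L Q₀.2 fun ha => hzQ₀ (IsLocalization.mk'_mem_iff.mpr ha)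
  refine ⟨{M | f ∈ M.1}ᶜ, ?_, MaxSpec.isOpen_basicOpen f,
    (hA.comapMaxSpec L Q₀).2.isPrime.notMem_of_isCoprime_of_mem hef
      (hA.under_le_comapMaxSpec L Q₀ he)⟩
  intro M hfM
  obtain ⟨Q, rfl⟩ := hA.comapMaxSpec_surjective L hS₀ M
  exact ⟨Q, fun hzQ => hfM (hA.under_le_comapMaxSpec L Q
    (hf _ Q.2.isPrime (IsLocalization.mk'_mem_iff.mp hzQ))), rfl⟩

noncomputable def maxSpecHomeomorph (hA : IsPMRing A) (hS₀ : S ≤ nonZeroDivisors A)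
    (hS : S.IsSeparating) : MaxSpec L ≃ₜ MaxSpec A :=
  let e := Equiv.ofBijective (hA.comapMaxSpec L)
    ⟨hA.comapMaxSpec_injective L hS, hA.comapMaxSpec_surjective L hS₀⟩
  { e with
    continuous_toFun := hA.continuous_comapMaxSpec L
    continuous_invFun := MaxSpec.continuous_iff.mpr fun z => by
      change IsOpen (e.symm ⁻¹' _)
      rw [← e.image_eq_preimage_symm]
      exact hA.isOpen_image_comapMaxSpec L hS₀ hS z }

end IsPMRing

end

/-- Theorem: if `A` carries a semi-transition map `ψ` and `A` is a pm-ring, then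
`Max(A)` is homeomorphic to `Max(A_S)`, where `S = {a | ψ a = ∅}`. -/
theorem maxSpec_homeomorph_localization {A : Type*} [CommRing A] {Λ : Type*}
    (ψ : A → Set Λ) (hψ : IsSemiTransition ψ) (hpm : IsPMRing A)
    (S : Submonoid A) (hS : (S : Set A) = {a : A | ψ a = ∅}) :
    Nonempty (MaxSpec A ≃ₜ MaxSpec (Localization S)) :=
  ⟨(hpm.maxSpecHomeomorph (Localization S) (hψ.le_nonZeroDivisors hS) (hψ.isSeparating hS)).symm⟩
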